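/- arXiv:2203.01770 — 3 statements merged into one kernel-verified Lean document; each statement's English description precedes it below -/
import Mathlib

section
/- The difference between the inverse modulation and the original modulation satisfies ‖γ̃ − γ‖_{L^p(ℝ)}^p ≤ ‖γ‖_{L^∞}^p · ∫_0^1 ‖γ' ∘ (Id + t γ̃)‖_{L^p(ℝ)}^p dt, and consequently ‖γ̃ − γ‖_{L^p(ℝ)} ≤ ‖γ‖_{L^∞} (1 + ‖γ'‖_{L^∞})^{1/p} ‖γ'‖_{L^p(ℝ)} for 1 ≤ p < ∞. -/
open Real MeasureTheory Set
open scoped ENNReal NNReal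

/-!
Since `Id + γ̃` inverts `Id - γ`, `γ̃ = γ ∘ (Id + γ̃)`, so `γ̃ x - γ x = γ (x + γ̃ x) - γ x` is an
integral of `γ'` along the segment from `x` to `x + γ̃ x`, of length at most `‖γ‖_∞`. Jensen's
inequality on `[0, 1]` and Tonelli give the first bound. Since `Id - γ` is bi-Lipschitz, its right
inverse `Id + γ̃` is Lipschitz, hence differentiable by the inverse function theorem, and
`x ↦ x + t γ̃ x` has derivative `(1 - t) + t / (1 - γ' ∘ (Id + γ̃)) ≥ 1 / (1 + ‖γ'‖_∞)`; by change
of variables each `‖γ' ∘ (Id + t γ̃)‖_p^p` is then at most `(1 + ‖γ'‖_∞) ‖γ'‖_p^p`.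
-/

theorem rpow_lintegral_le_lintegral_rpow {α : Type*} [MeasurableSpace α] {μ : Measure α}
    [IsProbabilityMeasure μ] {f : α → ℝ≥0∞} (hf : AEMeasurable f μ) {p : ℝ} (hp : 1 ≤ p) :
    (∫⁻ a, f a ∂μ) ^ p ≤ ∫⁻ a, f a ^ p ∂μ := by
  rcases hp.eq_or_lt with rfl | hp
  · simp
  have H := ENNReal.lintegral_mul_le_Lp_mul_Lq μ (Real.HolderConjugate.conjExponent hp) hf
    (aemeasurable_const (b := (1 : ℝ≥0∞)))
  simp only [Pi.mul_apply, mul_one, ENNReal.one_rpow, lintegral_one, measure_univ] at H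
  calc (∫⁻ a, f a ∂μ) ^ p ≤ ((∫⁻ a, f a ^ p ∂μ) ^ (1 / p)) ^ p :=
        ENNReal.rpow_le_rpow (by simpa using H) (by linarith)
    _ = ∫⁻ a, f a ^ p ∂μ := by
        rw [← ENNReal.rpow_mul, one_div_mul_cancel (by positivity), ENNReal.rpow_one]

theorem eLpNorm_le_mul_eLpNorm_of_lintegral_rpow_le {α E F : Type*} [MeasurableSpace α]
    {μ : Measure α} [NormedAddCommGroup E] [NormedAddCommGroup F] {f : α → E} {g : α → F}
    {p : ℝ} (hp : 0 < p) {K : ℝ≥0∞}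
    (h : ∫⁻ a, ‖f a‖ₑ ^ p ∂μ ≤ K ^ p * ∫⁻ a, ‖g a‖ₑ ^ p ∂μ) :
    eLpNorm f (ENNReal.ofReal p) μ ≤ K * eLpNorm g (ENNReal.ofReal p) μ := by
  have hp0 : ENNReal.ofReal p ≠ 0 := by simpa using hp
  simp only [eLpNorm_eq_lintegral_rpow_enorm_toReal hp0 ENNReal.ofReal_ne_top,
    ENNReal.toReal_ofReal hp.le]
  calc (∫⁻ a, ‖f a‖ₑ ^ p ∂μ) ^ (1 / p) ≤ (K ^ p * ∫⁻ a, ‖g a‖ₑ ^ p ∂μ) ^ (1 / p) :=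
        ENNReal.rpow_le_rpow h (by positivity)
    _ = K * (∫⁻ a, ‖g a‖ₑ ^ p ∂μ) ^ (1 / p) := by
        rw [ENNReal.mul_rpow_of_nonneg _ _ (by positivity), ← ENNReal.rpow_mul,
          mul_one_div_cancel hp.ne', ENNReal.rpow_one]

theorem enorm_sub_le_enorm_mul_lintegral_deriv {f : ℝ → ℝ} (hf : ContDiff ℝ 1 f) (x h : ℝ) :
    ‖f (x + h) - f x‖ₑ ≤ ‖h‖ₑ * ∫⁻ s in Icc (0 : ℝ) 1, ‖deriv f (x + s * h)‖ₑ := by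
  have hline : ∀ s, HasDerivAt (fun s => f (x + s * h)) (deriv f (x + s * h) * h) s := fun s =>
    ((hf.differentiable one_ne_zero _).hasDerivAt).comp s
      (by simpa using ((hasDerivAt_id s).mul_const h).const_add x)
  have hcont : Continuous fun s => deriv f (x + s * h) * h := by
    have := hf.continuous_deriv le_rfl
    fun_prop
  have hFTC : f (x + h) - f x = ∫ s in Ioc (0 : ℝ) 1, deriv f (x + s * h) * h := by
    rw [← intervalIntegral.integral_of_le zero_le_one,
      intervalIntegral.integral_eq_sub_of_hasDerivAt (fun s _ => hline s)
        (hcont.intervalIntegrable 0 1)]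
    simp
  calc ‖f (x + h) - f x‖ₑ ≤ ∫⁻ s in Ioc (0 : ℝ) 1, ‖deriv f (x + s * h) * h‖ₑ :=
        hFTC ▸ enorm_integral_le_lintegral_enorm _
    _ = ‖h‖ₑ * ∫⁻ s in Icc (0 : ℝ) 1, ‖deriv f (x + s * h)‖ₑ := by
        rw [Measure.restrict_congr_set Ioc_ae_eq_Icc, ← lintegral_const_mul' _ _ enorm_ne_top]
        simp only [enorm_mul, mul_comm]

theorem enorm_sub_rpow_le_enorm_rpow_mul_lintegral_deriv {f : ℝ → ℝ} (hf : ContDiff ℝ 1 f)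
    (x h : ℝ) {p : ℝ} (hp : 1 ≤ p) :
    ‖f (x + h) - f x‖ₑ ^ p ≤ ‖h‖ₑ ^ p * ∫⁻ s in Icc (0 : ℝ) 1, ‖deriv f (x + s * h)‖ₑ ^ p := by
  have : IsProbabilityMeasure (volume.restrict (Icc (0 : ℝ) 1)) := ⟨by simp⟩
  have hmeas : AEMeasurable (fun s => ‖deriv f (x + s * h)‖ₑ) (volume.restrict (Icc (0 : ℝ) 1)) :=
    ((hf.continuous_deriv le_rfl).measurable.comp (by fun_prop)).enorm.aemeasurable
  calc ‖f (x + h) - f x‖ₑ ^ p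
      ≤ (‖h‖ₑ * ∫⁻ s in Icc (0 : ℝ) 1, ‖deriv f (x + s * h)‖ₑ) ^ p :=
        ENNReal.rpow_le_rpow (enorm_sub_le_enorm_mul_lintegral_deriv hf x h) (by linarith)
    _ = ‖h‖ₑ ^ p * (∫⁻ s in Icc (0 : ℝ) 1, ‖deriv f (x + s * h)‖ₑ) ^ p :=
        ENNReal.mul_rpow_of_nonneg _ _ (by linarith)
    _ ≤ ‖h‖ₑ ^ p * ∫⁻ s in Icc (0 : ℝ) 1, ‖deriv f (x + s * h)‖ₑ ^ p := by
        gcongr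
        exact rpow_lintegral_le_lintegral_rpow hmeas hp

theorem lintegral_enorm_sub_comp_add_rpow_le {f h : ℝ → ℝ} (hf : ContDiff ℝ 1 f)
    (hh : Measurable h) {M : ℝ≥0∞} (hM : ∀ x, ‖h x‖ₑ ≤ M) {p : ℝ} (hp : 1 ≤ p) :
    ∫⁻ x, ‖f (x + h x) - f x‖ₑ ^ p
      ≤ M ^ p * ∫⁻ t in Icc (0 : ℝ) 1, ∫⁻ x, ‖deriv f (x + t * h x)‖ₑ ^ p := by
  have hmeas : AEMeasurable (Function.uncurry fun x t => ‖deriv f (x + t * h x)‖ₑ ^ p)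
      (volume.prod (volume.restrict (Icc (0 : ℝ) 1))) :=
    (((hf.continuous_deriv le_rfl).measurable.comp (by fun_prop)).enorm.pow_const p).aemeasurable
  calc ∫⁻ x, ‖f (x + h x) - f x‖ₑ ^ p
      ≤ ∫⁻ x, M ^ p * ∫⁻ t in Icc (0 : ℝ) 1, ‖deriv f (x + t * h x)‖ₑ ^ p := by
        refine lintegral_mono fun x => ?_
        grw [enorm_sub_rpow_le_enorm_rpow_mul_lintegral_deriv hf x (h x) hp, hM x]
    _ = M ^ p * ∫⁻ t in Icc (0 : ℝ) 1, ∫⁻ x, ‖deriv f (x + t * h x)‖ₑ ^ p := by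
        have hinner : AEMeasurable fun x => ∫⁻ t in Icc (0 : ℝ) 1, ‖deriv f (x + t * h x)‖ₑ ^ p :=
          hmeas.lintegral_prod_right'
        rw [lintegral_const_mul'' _ hinner, lintegral_lintegral_swap hmeas]

theorem lintegral_comp_le_of_le_deriv {f f' : ℝ → ℝ} {a : ℝ} (ha : 0 < a)
    (hf : ∀ x, HasDerivAt f (f' x) x) (hf' : ∀ x, a ≤ f' x) (g : ℝ → ℝ≥0∞) :
    ∫⁻ x, g (f x) ≤ ENNReal.ofReal a⁻¹ * ∫⁻ y, g y := by
  have hinj : f.Injective :=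
    (strictMono_of_hasDerivAt_pos hf fun x => ha.trans_le (hf' x)).injective
  have hcov := lintegral_image_eq_lintegral_abs_deriv_mul MeasurableSet.univ
    (fun x _ => (hf x).hasDerivWithinAt) hinj.injOn g
  rw [image_univ, Measure.restrict_univ] at hcov
  calc ∫⁻ x, g (f x) = ENNReal.ofReal a⁻¹ * ∫⁻ x, ENNReal.ofReal a * g (f x) := by
        rw [lintegral_const_mul' _ _ ENNReal.ofReal_ne_top, ← mul_assoc,
          ← ENNReal.ofReal_mul (inv_nonneg.2 ha.le), inv_mul_cancel₀ ha.ne', ENNReal.ofReal_one,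
          one_mul]
    _ ≤ ENNReal.ofReal a⁻¹ * ∫⁻ x, ENNReal.ofReal |f' x| * g (f x) := by
        gcongr with x
        exact (hf' x).trans (le_abs_self _)
    _ ≤ ENNReal.ofReal a⁻¹ * ∫⁻ y, g y := by
        rw [← hcov]
        gcongr
        exact Measure.restrict_le_self

theorem LipschitzWith.lipschitzWith_rightInverse_id_sub {E : Type*} [SeminormedAddCommGroup E]
    {g ψ : E → E} {K : ℝ≥0} (hg : LipschitzWith K g) (hK : K < 1)
    (hψ : Function.RightInverse ψ fun x => x - g x) : LipschitzWith (1 - K)⁻¹ ψ := by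
  have h := AntilipschitzWith.id.add_lipschitzWith hg.neg (by simpa using hK)
  rw [inv_one] at h
  exact h.to_rightInverse fun x => by simpa [sub_eq_add_neg] using hψ x

theorem inv_one_add_le_one_add_mul_inv_one_sub_sub_one {c g t : ℝ} (hg : |g| ≤ c) (hg1 : g < 1)
    (ht : t ∈ Icc (0 : ℝ) 1) : (1 + c)⁻¹ ≤ 1 + t * ((1 - g)⁻¹ - 1) := by
  have hc : 0 ≤ c := (abs_nonneg g).trans hg
  have hle_one : (1 + c)⁻¹ ≤ 1 := inv_le_one_of_one_le₀ (by linarith)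
  have hle_inv : (1 + c)⁻¹ ≤ (1 - g)⁻¹ :=
    inv_anti₀ (by linarith) (by linarith [neg_abs_le g])
  nlinarith [ht.1, ht.2]

section InverseModulation

variable {γ γt : ℝ → ℝ} {c : ℝ}

theorem hasDerivAt_rightInverse_id_sub {ψ : ℝ → ℝ} (hγ : Differentiable ℝ γ)
    (hder : ∀ x, |deriv γ x| ≤ c) (hc1 : c < 1) (hψ : Function.RightInverse ψ fun x => x - γ x)
    (x : ℝ) : HasDerivAt ψ (1 - deriv γ (ψ x))⁻¹ x := by
  have hc : 0 ≤ c := (abs_nonneg _).trans (hder 0)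
  have hlip : LipschitzWith c.toNNReal γ :=
    lipschitzWith_of_nnnorm_deriv_le hγ fun x => by
      rw [← NNReal.coe_le_coe, coe_nnnorm, Real.coe_toNNReal _ hc]
      exact hder x
  have hψ_cont : Continuous ψ :=
    (hlip.lipschitzWith_rightInverse_id_sub (by simpa using hc1) hψ).continuous
  refine HasDerivAt.of_local_left_inverse (f := fun y => y - γ y) hψ_cont.continuousAt
    ((hasDerivAt_id' _).sub (hγ _).hasDerivAt) ?_ (Filter.Eventually.of_forall hψ)
  linarith [le_abs_self (deriv γ (ψ x)), hder (ψ x)]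

theorem continuous_of_rightInverse_id_add (hγ : Differentiable ℝ γ)
    (hder : ∀ x, |deriv γ x| ≤ c) (hc1 : c < 1)
    (hinv : Function.RightInverse (fun x => x + γt x) fun x => x - γ x) : Continuous γt := by
  have h : Continuous fun x => x + γt x :=
    continuous_iff_continuousAt.2 fun x =>
      (hasDerivAt_rightInverse_id_sub hγ hder hc1 hinv x).continuousAt
  convert h.sub continuous_id' using 1
  funext y
  simp

theorem lintegral_comp_add_mul_le (hγ : Differentiable ℝ γ) (hder : ∀ x, |deriv γ x| ≤ c)
    (hc1 : c < 1) (hinv : Function.RightInverse (fun x => x + γt x) fun x => x - γ x)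
    {t : ℝ} (ht : t ∈ Icc (0 : ℝ) 1) (g : ℝ → ℝ≥0∞) :
    ∫⁻ x, g (x + t * γt x) ≤ ENNReal.ofReal (1 + c) * ∫⁻ y, g y := by
  have hc : 0 ≤ c := (abs_nonneg _).trans (hder 0)
  have hderiv : ∀ x, HasDerivAt (fun y => y + t * γt y)
      (1 + t * ((1 - deriv γ (x + γt x))⁻¹ - 1)) x := fun x => by
    have hψ := hasDerivAt_rightInverse_id_sub hγ hder hc1 hinv x
    have hγt : HasDerivAt γt ((1 - deriv γ (x + γt x))⁻¹ - 1) x :=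
      (hψ.sub (hasDerivAt_id' x)).congr_of_eventuallyEq (.of_forall fun y => by simp)
    exact (hasDerivAt_id' x).add (hγt.const_mul t)
  simpa using lintegral_comp_le_of_le_deriv (by positivity) hderiv
    (fun x => inv_one_add_le_one_add_mul_inv_one_sub_sub_one (hder _)
      ((le_abs_self _).trans_lt ((hder _).trans_lt hc1)) ht) g

end InverseModulation

theorem stmt_6_general (γ γt : ℝ → ℝ) (hγ : ContDiff ℝ 1 γ)
    (M : ℝ) (hbdd : ∀ x, |γ x| ≤ M)
    (c : ℝ) (hc1 : c < 1) (hder : ∀ x, |deriv γ x| ≤ c)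
    (hinv₂ : ∀ x : ℝ, (x + γt x) - γ (x + γt x) = x)
    (p : ℝ) (hp : 1 ≤ p) :
    (∫⁻ x : ℝ, (ENNReal.ofReal |γt x - γ x|) ^ p ∂volume)
      ≤ ENNReal.ofReal (M ^ p) *
        ∫⁻ t in Set.Icc (0:ℝ) 1,
          (∫⁻ x : ℝ, (ENNReal.ofReal |deriv γ (x + t * γt x)|) ^ p ∂volume) ∂volume
    ∧ eLpNorm (fun x => γt x - γ x) (ENNReal.ofReal p) volume
      ≤ ENNReal.ofReal (M * (1 + c) ^ (1 / p)) *
          eLpNorm (deriv γ) (ENNReal.ofReal p) volume := by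
  have hγ1 : Differentiable ℝ γ := hγ.differentiable one_ne_zero
  have hM : 0 ≤ M := (abs_nonneg _).trans (hbdd 0)
  have hc : 0 ≤ c := (abs_nonneg _).trans (hder 0)
  have hγ_comp : ∀ x, γ (x + γt x) = γt x := fun x => by linarith [hinv₂ x]
  have hγt_le : ∀ x, ‖γt x‖ₑ ≤ ENNReal.ofReal M := fun x => by
    rw [Real.enorm_eq_ofReal_abs, ← hγ_comp]
    exact ENNReal.ofReal_le_ofReal (hbdd _)
  have hγt_meas : Measurable γt := (continuous_of_rightInverse_id_add hγ1 hder hc1 hinv₂).measurable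
  have hp0 : (0 : ℝ) ≤ p := by linarith
  have hfirst : ∫⁻ x, ‖γt x - γ x‖ₑ ^ p
      ≤ ENNReal.ofReal M ^ p * ∫⁻ t in Icc (0 : ℝ) 1, ∫⁻ x, ‖deriv γ (x + t * γt x)‖ₑ ^ p := by
    simpa only [hγ_comp] using lintegral_enorm_sub_comp_add_rpow_le hγ hγt_meas hγt_le hp
  have hsecond : ∫⁻ t in Icc (0 : ℝ) 1, ∫⁻ x, ‖deriv γ (x + t * γt x)‖ₑ ^ p
      ≤ ENNReal.ofReal (1 + c) * ∫⁻ y, ‖deriv γ y‖ₑ ^ p := by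
    refine (setLIntegral_mono' measurableSet_Icc fun t ht =>
      lintegral_comp_add_mul_le hγ1 hder hc1 hinv₂ ht fun y => ‖deriv γ y‖ₑ ^ p).trans ?_
    simp
  have hK : ENNReal.ofReal (M * (1 + c) ^ (1 / p)) ^ p
      = ENNReal.ofReal M ^ p * ENNReal.ofReal (1 + c) := by
    rw [ENNReal.ofReal_rpow_of_nonneg (by positivity) hp0, Real.mul_rpow hM (by positivity),
      ← Real.rpow_mul (by positivity), one_div_mul_cancel (by positivity), Real.rpow_one,
      ENNReal.ofReal_mul (by positivity), ENNReal.ofReal_rpow_of_nonneg hM hp0]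
  refine ⟨?_, eLpNorm_le_mul_eLpNorm_of_lintegral_rpow_le (by linarith) ?_⟩
  · simpa only [Real.enorm_eq_ofReal_abs, ENNReal.ofReal_rpow_of_nonneg hM hp0] using hfirst
  calc ∫⁻ x, ‖γt x - γ x‖ₑ ^ p
      ≤ ENNReal.ofReal M ^ p * (ENNReal.ofReal (1 + c) * ∫⁻ y, ‖deriv γ y‖ₑ ^ p) := by
        grw [hfirst, hsecond]
    _ = _ := by rw [hK, mul_assoc]

/-- `‖γ̃ - γ‖_{L^p}^p ≤ ‖γ‖_∞^p ∫_0^1 ‖γ' ∘ (Id + t γ̃)‖_{L^p}^p dt`, and consequently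
`‖γ̃ - γ‖_{L^p} ≤ ‖γ‖_∞ (1 + ‖γ'‖_∞)^{1/p} ‖γ'‖_{L^p}`. -/
theorem stmt_6 (γ γt : ℝ → ℝ) (hγ : ContDiff ℝ 1 γ)
    (M : ℝ) (hbdd : ∀ x, |γ x| ≤ M)
    (c : ℝ) (hc1 : c < 1) (hder : ∀ x, |deriv γ x| ≤ c)
    (hinv₁ : ∀ x : ℝ, (x - γ x) + γt (x - γ x) = x)
    (hinv₂ : ∀ x : ℝ, (x + γt x) - γ (x + γt x) = x)
    (p : ℝ) (hp : 1 ≤ p)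
    (hγp : MemLp (deriv γ) (ENNReal.ofReal p) volume) :
    (∫⁻ x : ℝ, (ENNReal.ofReal |γt x - γ x|) ^ p ∂volume)
      ≤ ENNReal.ofReal (M ^ p) *
        ∫⁻ t in Set.Icc (0:ℝ) 1,
          (∫⁻ x : ℝ, (ENNReal.ofReal |deriv γ (x + t * γt x)|) ^ p ∂volume) ∂volume
    ∧ eLpNorm (fun x => γt x - γ x) (ENNReal.ofReal p) volume
      ≤ ENNReal.ofReal (M * (1 + c) ^ (1 / p)) *
          eLpNorm (deriv γ) (ENNReal.ofReal p) volume :=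
  stmt_6_general γ γt hγ M hbdd c hc1 hder hinv₂ p hp
end

section
/- One has the comparison bound ‖ψ − φ ∘ (Id + γ)‖_{L^p(ℝ)} ≤ (1 + ‖γ'‖_{L^∞})^{1/p} ‖ψ ∘ (Id − γ) − φ‖_{L^p(ℝ)} + ‖φ'‖_{L^∞} (1 + ‖γ'‖_{L^∞})^{1/p} ‖γ‖_{L^∞} ‖γ'‖_{L^p(ℝ)} for 1 ≤ p < ∞. -/
open Real MeasureTheory
open scoped ENNReal Interval

/-!
Write `g = Id - γ`, so that `Id + γ̃ = g⁻¹`, and split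
`ψ - φ ∘ (Id + γ) = (ψ - φ ∘ g⁻¹) + (φ ∘ g⁻¹ - φ ∘ (Id + γ))`.
Since `0 < g' ≤ 1 + ‖γ'‖_∞`, the substitution `x = g y` gives
`‖F ∘ g⁻¹‖_p ≤ (1 + ‖γ'‖_∞)^{1/p} ‖F‖_p`; it turns the first term into `ψ ∘ g - φ` and the second
into `y ↦ φ y - φ (g y + γ (g y))`, which is at most `‖φ'‖_∞ |γ y - γ (g y)|`, and
`|γ y - γ (g y)| ≤ ∫_{[g y, y]} |γ'|`. Jensen's inequality on this interval of length
`|γ y| ≤ ‖γ‖_∞`, followed by Fubini, yields `‖γ‖_∞ ‖γ'‖_p`: a point `t` lies in `[g y, y]` only for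
`y` between `t` and `g⁻¹ t`, an interval of length at most `‖γ‖_∞`.
-/

lemma ENNReal.rpow_lintegral_le_measure_univ_rpow_mul {α : Type*} [MeasurableSpace α]
    (μ : Measure α) {f : α → ℝ≥0∞} (hf : AEMeasurable f μ) {p : ℝ} (hp : 1 ≤ p) :
    (∫⁻ x, f x ∂μ) ^ p ≤ μ Set.univ ^ (p - 1) * ∫⁻ x, f x ^ p ∂μ := by
  rcases hp.eq_or_lt with rfl | hp
  · simp
  have hpq := Real.HolderConjugate.conjExponent hp
  have holder := ENNReal.lintegral_mul_le_Lp_mul_Lq μ hpq hf (aemeasurable_const (b := 1))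
  simp only [Pi.mul_apply, mul_one, ENNReal.one_rpow, lintegral_const, one_mul] at holder
  calc (∫⁻ x, f x ∂μ) ^ p
      ≤ ((∫⁻ x, f x ^ p ∂μ) ^ (1 / p) * μ Set.univ ^ (1 / p.conjExponent)) ^ p := by
        gcongr
    _ = μ Set.univ ^ (p - 1) * ∫⁻ x, f x ^ p ∂μ := by
        have h₁ : 1 / p * p = 1 := by field_simp
        have h₂ : 1 / p.conjExponent * p = p - 1 := by rw [Real.conjExponent]; field_simp
        rw [ENNReal.mul_rpow_of_nonneg _ _ (by linarith), ← ENNReal.rpow_mul, ← ENNReal.rpow_mul,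
          h₁, h₂, ENNReal.rpow_one, mul_comm]

lemma eLpNorm_le_rpow_mul_of_lintegral_le {α ε ε' : Type*} [MeasurableSpace α] {μ : Measure α}
    [ENorm ε] [ENorm ε'] {f : α → ε} {g : α → ε'} {p : ℝ} (hp : 0 < p) {C : ℝ≥0∞}
    (h : ∫⁻ x, ‖f x‖ₑ ^ p ∂μ ≤ C * ∫⁻ x, ‖g x‖ₑ ^ p ∂μ) :
    eLpNorm f (ENNReal.ofReal p) μ ≤ C ^ (1 / p) * eLpNorm g (ENNReal.ofReal p) μ := by
  have hp' : ENNReal.ofReal p ≠ 0 := by simpa using hp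
  rw [eLpNorm_eq_lintegral_rpow_enorm_toReal hp' ENNReal.ofReal_ne_top,
    eLpNorm_eq_lintegral_rpow_enorm_toReal hp' ENNReal.ofReal_ne_top, ENNReal.toReal_ofReal hp.le,
    ← ENNReal.mul_rpow_of_nonneg _ _ (by positivity)]
  gcongr

lemma lintegral_le_ofReal_mul_lintegral_comp {f f' : ℝ → ℝ} (hf : ∀ x, HasDerivAt f (f' x) x)
    (hbij : Function.Bijective f) {K : ℝ} (hK : ∀ x, |f' x| ≤ K) (G : ℝ → ℝ≥0∞) :
    ∫⁻ x, G x ≤ ENNReal.ofReal K * ∫⁻ x, G (f x) := by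
  have hcov := lintegral_image_eq_lintegral_abs_deriv_mul MeasurableSet.univ
    (fun x _ => (hf x).hasDerivWithinAt) hbij.injective.injOn G
  rw [Set.image_univ, hbij.surjective.range_eq, Measure.restrict_univ] at hcov
  rw [hcov, ← lintegral_const_mul' _ _ ENNReal.ofReal_ne_top]
  gcongr
  exact hK _

lemma eLpNorm_le_ofReal_rpow_mul_eLpNorm_comp {ε : Type*} [ENorm ε] {f f' : ℝ → ℝ}
    (hf : ∀ x, HasDerivAt f (f' x) x) (hbij : Function.Bijective f) {K : ℝ}
    (hK : ∀ x, |f' x| ≤ K) (F : ℝ → ε) {p : ℝ} (hp : 0 < p) :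
    eLpNorm F (ENNReal.ofReal p) volume
      ≤ ENNReal.ofReal (K ^ (1 / p)) * eLpNorm (fun x => F (f x)) (ENNReal.ofReal p) volume := by
  rw [← ENNReal.ofReal_rpow_of_nonneg ((abs_nonneg _).trans (hK 0)) (by positivity)]
  exact eLpNorm_le_rpow_mul_of_lintegral_le hp (lintegral_le_ofReal_mul_lintegral_comp hf hbij hK _)

lemma eLpNorm_comp_sub_comp_le {α : Type*} [MeasurableSpace α] {μ : Measure α} {φ : ℝ → ℝ}
    (hφ : Differentiable ℝ φ) {C : ℝ} (hC : ∀ x, |deriv φ x| ≤ C) (u v : α → ℝ) (p : ℝ≥0∞) :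
    eLpNorm (fun x => φ (u x) - φ (v x)) p μ
      ≤ ENNReal.ofReal C * eLpNorm (fun x => u x - v x) p μ :=
  eLpNorm_le_mul_eLpNorm_of_ae_le_mul (ae_of_all _ fun _ =>
    convex_univ.norm_image_sub_le_of_norm_deriv_le (fun y _ => hφ y) (fun y _ => hC y)
      trivial trivial) p

lemma enorm_sub_rpow_le_lintegral_uIoc {γ : ℝ → ℝ} (hγ : ContDiff ℝ 1 γ) (a b : ℝ) {p : ℝ}
    (hp : 1 ≤ p) :
    ‖γ b - γ a‖ₑ ^ p ≤ ENNReal.ofReal |b - a| ^ (p - 1) * ∫⁻ t in Ι a b, ‖deriv γ t‖ₑ ^ p := by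
  have hftc : γ b - γ a = ∫ t in a..b, deriv γ t :=
    (intervalIntegral.integral_deriv_eq_sub (fun t _ => hγ.differentiable one_ne_zero t)
      ((hγ.continuous_deriv le_rfl).intervalIntegrable _ _)).symm
  have hle : ‖γ b - γ a‖ₑ ≤ ∫⁻ t in Ι a b, ‖deriv γ t‖ₑ := by
    rw [hftc, ← ofReal_norm, intervalIntegral.norm_integral_eq_norm_integral_uIoc, ofReal_norm]
    exact enorm_integral_le_lintegral_enorm _
  calc ‖γ b - γ a‖ₑ ^ p ≤ (∫⁻ t in Ι a b, ‖deriv γ t‖ₑ) ^ p := by gcongr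
    _ ≤ _ := by
      simpa only [Measure.restrict_apply_univ, Real.volume_uIoc] using
        ENNReal.rpow_lintegral_le_measure_univ_rpow_mul (volume.restrict (Ι a b))
          (measurable_deriv γ).enorm.aemeasurable hp

section
variable {g : ℝ → ℝ} {M : ℝ}

lemma measurableSet_setOf_snd_mem_uIoc (hg : Measurable g) :
    MeasurableSet {z : ℝ × ℝ | z.2 ∈ Ι (g z.1) z.1} :=
  (measurableSet_lt ((hg.comp measurable_fst).min measurable_fst) measurable_snd).inter
    (measurableSet_le measurable_snd ((hg.comp measurable_fst).max measurable_fst))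

lemma volume_setOf_mem_uIoc_le (hg : StrictMono g) (hg' : Function.Surjective g)
    (hM : ∀ y, |y - g y| ≤ M) (t : ℝ) : volume {y | t ∈ Ι (g y) y} ≤ ENNReal.ofReal M := by
  obtain ⟨s, rfl⟩ := hg' t
  calc volume {y | g s ∈ Ι (g y) y} ≤ volume (Set.uIcc (g s) s) := by
        refine measure_mono fun y hy => ?_
        rcases Set.mem_uIoc.1 hy with ⟨hlt, hle⟩ | ⟨hlt, hle⟩
        · exact Set.mem_uIcc.2 (Or.inl ⟨hle, (hg.lt_iff_lt.1 hlt).le⟩)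
        · exact Set.mem_uIcc.2 (Or.inr ⟨hg.le_iff_le.1 hle, hlt.le⟩)
    _ = ENNReal.ofReal |s - g s| := Real.volume_interval
    _ ≤ ENNReal.ofReal M := ENNReal.ofReal_le_ofReal (hM s)

lemma lintegral_setLIntegral_uIoc_le (hg : StrictMono g) (hg' : Function.Surjective g)
    (hM : ∀ y, |y - g y| ≤ M) {F : ℝ → ℝ≥0∞} (hF : Measurable F) :
    ∫⁻ y, ∫⁻ t in Ι (g y) y, F t ≤ ENNReal.ofReal M * ∫⁻ t, F t := by
  set S := {z : ℝ × ℝ | z.2 ∈ Ι (g z.1) z.1}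
  have hS : MeasurableSet S := measurableSet_setOf_snd_mem_uIoc hg.monotone.measurable
  calc ∫⁻ y, ∫⁻ t in Ι (g y) y, F t
      = ∫⁻ y, ∫⁻ t, S.indicator (F ∘ Prod.snd) (y, t) := by
        simp_rw [← lintegral_indicator measurableSet_uIoc]
        rfl
    _ = ∫⁻ t, ∫⁻ y, S.indicator (F ∘ Prod.snd) (y, t) :=
        lintegral_lintegral_swap ((hF.comp measurable_snd).indicator hS).aemeasurable
    _ = ∫⁻ t, F t * volume {y | t ∈ Ι (g y) y} := by
        refine lintegral_congr fun t => ?_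
        have hSt : MeasurableSet {y | t ∈ Ι (g y) y} := measurable_prodMk_right hS
        rw [← lintegral_indicator_const hSt]
        rfl
    _ ≤ ∫⁻ t, F t * ENNReal.ofReal M := by
        gcongr with t
        exact volume_setOf_mem_uIoc_le hg hg' hM t
    _ = ENNReal.ofReal M * ∫⁻ t, F t := by
        rw [lintegral_mul_const' _ _ ENNReal.ofReal_ne_top, mul_comm]

lemma eLpNorm_sub_comp_le {γ : ℝ → ℝ} (hγ : ContDiff ℝ 1 γ) (hg : StrictMono g)
    (hg' : Function.Surjective g) (hM : ∀ y, |y - g y| ≤ M) {p : ℝ} (hp : 1 ≤ p) :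
    eLpNorm (fun y => γ y - γ (g y)) (ENNReal.ofReal p) volume
      ≤ ENNReal.ofReal M * eLpNorm (deriv γ) (ENNReal.ofReal p) volume := by
  have hp0 : 0 < p := by linarith
  have hMp : ENNReal.ofReal M ^ (p - 1) * ENNReal.ofReal M = ENNReal.ofReal M ^ p := by
    conv_rhs => rw [← sub_add_cancel p 1]
    rw [ENNReal.rpow_add_of_nonneg _ _ (by linarith) zero_le_one, ENNReal.rpow_one]
  have key : ∫⁻ y, ‖γ y - γ (g y)‖ₑ ^ p ≤ ENNReal.ofReal M ^ p * ∫⁻ t, ‖deriv γ t‖ₑ ^ p :=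
    calc ∫⁻ y, ‖γ y - γ (g y)‖ₑ ^ p
        ≤ ∫⁻ y, ENNReal.ofReal M ^ (p - 1) * ∫⁻ t in Ι (g y) y, ‖deriv γ t‖ₑ ^ p := by
          refine lintegral_mono fun y => (enorm_sub_rpow_le_lintegral_uIoc hγ (g y) y hp).trans ?_
          gcongr
          exact hM y
      _ = ENNReal.ofReal M ^ (p - 1) * ∫⁻ y, ∫⁻ t in Ι (g y) y, ‖deriv γ t‖ₑ ^ p :=
          lintegral_const_mul' _ _
            (ENNReal.rpow_ne_top_of_nonneg (by linarith) ENNReal.ofReal_ne_top)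
      _ ≤ ENNReal.ofReal M ^ (p - 1) * (ENNReal.ofReal M * ∫⁻ t, ‖deriv γ t‖ₑ ^ p) := by
          gcongr
          exact lintegral_setLIntegral_uIoc_le hg hg' hM ((measurable_deriv γ).enorm.pow_const p)
      _ = ENNReal.ofReal M ^ p * ∫⁻ t, ‖deriv γ t‖ₑ ^ p := by rw [← mul_assoc, hMp]
  have := eLpNorm_le_rpow_mul_of_lintegral_le hp0 key
  rwa [one_div, ENNReal.rpow_rpow_inv hp0.ne'] at this

lemma eLpNorm_sub_comp_add_comp_sub_le {φ γ : ℝ → ℝ} (hφ : Differentiable ℝ φ) {C : ℝ}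
    (hC : ∀ x, |deriv φ x| ≤ C) (hγ : ContDiff ℝ 1 γ) (hmono : StrictMono fun x => x - γ x)
    (hsurj : Function.Surjective fun x => x - γ x) (hM : ∀ x, |γ x| ≤ M) {p : ℝ} (hp : 1 ≤ p) :
    eLpNorm (fun x => φ x - φ (x - γ x + γ (x - γ x))) (ENNReal.ofReal p) volume
      ≤ ENNReal.ofReal C * (ENNReal.ofReal M * eLpNorm (deriv γ) (ENNReal.ofReal p) volume) := by
  have hlip := eLpNorm_comp_sub_comp_le (μ := volume) hφ hC id
    (fun x => x - γ x + γ (x - γ x)) (ENNReal.ofReal p)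
  simp only [id, sub_add_eq_sub_sub, sub_sub_cancel] at hlip
  have hγ_sub := eLpNorm_sub_comp_le hγ hmono hsurj (fun y => by simpa using hM y) hp
  exact hlip.trans (by gcongr)

end

lemma strictMono_id_sub_of_abs_deriv_le {γ : ℝ → ℝ} (hγ : Differentiable ℝ γ) {c : ℝ}
    (hc : c < 1) (hder : ∀ x, |deriv γ x| ≤ c) : StrictMono fun x => x - γ x :=
  strictMono_of_hasDerivAt_pos (fun x => ((hasDerivAt_id x).sub (hγ x).hasDerivAt :))
    fun x => by linarith [(abs_le.1 (hder x)).2]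

lemma eLpNorm_le_eLpNorm_comp_id_sub {ε : Type*} [ENorm ε] {γ : ℝ → ℝ}
    (hγ : Differentiable ℝ γ) {c : ℝ} (hc : c < 1) (hder : ∀ x, |deriv γ x| ≤ c)
    (hsurj : Function.Surjective fun x => x - γ x) (F : ℝ → ε) {p : ℝ} (hp : 0 < p) :
    eLpNorm F (ENNReal.ofReal p) volume
      ≤ ENNReal.ofReal ((1 + c) ^ (1 / p)) *
          eLpNorm (fun x => F (x - γ x)) (ENNReal.ofReal p) volume :=
  eLpNorm_le_ofReal_rpow_mul_eLpNorm_comp (fun x => (hasDerivAt_id x).sub (hγ x).hasDerivAt)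
    ⟨(strictMono_id_sub_of_abs_deriv_le hγ hc hder).injective, hsurj⟩
    (fun x => (abs_sub _ _).trans (by rw [abs_one]; linarith [hder x])) F hp

theorem stmt_8_general (ψ φ γ γt : ℝ → ℝ)
    (hψ : Measurable ψ) (hφ : ContDiff ℝ 1 φ)
    (Cφ : ℝ) (hCφ : ∀ x, |deriv φ x| ≤ Cφ)
    (hγ : ContDiff ℝ 1 γ)
    (M : ℝ) (hbdd : ∀ x, |γ x| ≤ M)
    (c : ℝ) (hc1 : c < 1) (hder : ∀ x, |deriv γ x| ≤ c)
    (hinv₁ : ∀ x : ℝ, (x - γ x) + γt (x - γ x) = x)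
    (hinv₂ : ∀ x : ℝ, (x + γt x) - γ (x + γt x) = x)
    (p : ℝ) (hp : 1 ≤ p) :
    eLpNorm (fun x => ψ x - φ (x + γ x)) (ENNReal.ofReal p) volume
      ≤ ENNReal.ofReal ((1 + c) ^ (1 / p)) *
          eLpNorm (fun x => ψ (x - γ x) - φ x) (ENNReal.ofReal p) volume
        + ENNReal.ofReal (Cφ * (1 + c) ^ (1 / p) * M) *
            eLpNorm (deriv γ) (ENNReal.ofReal p) volume := by
  have hγd := hγ.differentiable one_ne_zero
  have hmono := strictMono_id_sub_of_abs_deriv_le hγd hc1 hder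
  have hsurj : Function.Surjective fun x => x - γ x := fun y => ⟨y + γt y, hinv₂ y⟩
  have hinv_mono : StrictMono fun x => x + γt x := fun a b hab =>
    hmono.lt_iff_lt.1 (by simpa only [hinv₂] using hab)
  have hA := eLpNorm_le_eLpNorm_comp_id_sub hγd hc1 hder hsurj
    (fun x => ψ x - φ (x + γt x)) (by linarith)
  have hB := eLpNorm_le_eLpNorm_comp_id_sub hγd hc1 hder hsurj
    (fun x => φ (x + γt x) - φ (x + γ x)) (by linarith)
  simp only [hinv₁] at hA hB
  have hB' := eLpNorm_sub_comp_add_comp_sub_le (hφ.differentiable one_ne_zero) hCφ hγ hmono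
    hsurj hbdd hp
  have hφm := hφ.continuous.measurable
  have hinv_meas := hinv_mono.monotone.measurable
  calc eLpNorm (fun x => ψ x - φ (x + γ x)) (ENNReal.ofReal p) volume
      = eLpNorm ((fun x => ψ x - φ (x + γt x)) + fun x => φ (x + γt x) - φ (x + γ x))
          (ENNReal.ofReal p) volume := by
        simp only [Pi.add_def, sub_add_sub_cancel]
    _ ≤ _ := eLpNorm_add_le (hψ.sub (hφm.comp hinv_meas)).aestronglyMeasurable
        ((hφm.comp hinv_meas).sub
          (hφm.comp (measurable_id.add hγ.continuous.measurable))).aestronglyMeasurable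
        (ENNReal.one_le_ofReal.2 hp)
    _ ≤ _ := add_le_add hA (hB.trans (mul_le_mul_right hB' _))
    _ = _ := by
        have hCφ0 : 0 ≤ Cφ := (abs_nonneg _).trans (hCφ 0)
        have hc0 : 0 ≤ 1 + c := by linarith [(abs_nonneg _).trans (hder 0)]
        rw [ENNReal.ofReal_mul (mul_nonneg hCφ0 (Real.rpow_nonneg hc0 _)), ENNReal.ofReal_mul hCφ0]
        ring

/-- Comparison bound:
`‖ψ - φ∘(Id+γ)‖_{L^p} ≤ (1+‖γ'‖_∞)^{1/p} ‖ψ∘(Id-γ) - φ‖_{L^p}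
 + ‖φ'‖_∞ (1+‖γ'‖_∞)^{1/p} ‖γ‖_∞ ‖γ'‖_{L^p}`. -/
theorem stmt_8 (ψ φ γ γt : ℝ → ℝ)
    (hψ : Measurable ψ) (hφ : ContDiff ℝ 1 φ)
    (Cφ : ℝ) (hCφ : ∀ x, |deriv φ x| ≤ Cφ)
    (hγ : ContDiff ℝ 1 γ)
    (M : ℝ) (hbdd : ∀ x, |γ x| ≤ M)
    (c : ℝ) (hc1 : c < 1) (hder : ∀ x, |deriv γ x| ≤ c)
    (hinv₁ : ∀ x : ℝ, (x - γ x) + γt (x - γ x) = x)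
    (hinv₂ : ∀ x : ℝ, (x + γt x) - γ (x + γt x) = x)
    (p : ℝ) (hp : 1 ≤ p)
    (hγp : MemLp (deriv γ) (ENNReal.ofReal p) volume)
    (hfin : MemLp (fun x => ψ (x - γ x) - φ x) (ENNReal.ofReal p) volume) :
    eLpNorm (fun x => ψ x - φ (x + γ x)) (ENNReal.ofReal p) volume
      ≤ ENNReal.ofReal ((1 + c) ^ (1 / p)) *
          eLpNorm (fun x => ψ (x - γ x) - φ x) (ENNReal.ofReal p) volume
        + ENNReal.ofReal (Cφ * (1 + c) ^ (1 / p) * M) *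
            eLpNorm (deriv γ) (ENNReal.ofReal p) volume :=
  stmt_8_general ψ φ γ γt hψ hφ Cφ hCφ hγ M hbdd c hc1 hder hinv₁ hinv₂ p hp
end

section
/- One has the bound ‖ψ∘(Id−γ) − φ‖_{L^p} ≤ (1−‖γ'‖_{L^∞})^{-1/p}‖ψ − φ∘(Id−γ)^{-1}‖_{L^p}. -/
open Real MeasureTheory

/-- Reverse comparison bound:
`‖ψ∘(Id-γ) - φ‖_{L^p} ≤ (1-‖γ'‖_∞)^{-1/p} ‖ψ - φ∘(Id-γ)⁻¹‖_{L^p}`. -/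
theorem stmt_9 (ψ φ γ γt : ℝ → ℝ)
    (hψ : Measurable ψ) (hφ : Measurable φ)
    (hγ : ContDiff ℝ 1 γ)
    (M : ℝ) (hbdd : ∀ x, |γ x| ≤ M)
    (c : ℝ) (hc1 : c < 1) (hder : ∀ x, |deriv γ x| ≤ c)
    (hinv₁ : ∀ x : ℝ, (x - γ x) + γt (x - γ x) = x)
    (hinv₂ : ∀ x : ℝ, (x + γt x) - γ (x + γt x) = x)
    (p : ℝ) (hp : 1 ≤ p)
    (hfin₁ : MemLp (fun x => ψ (x - γ x) - φ x) (ENNReal.ofReal p) volume)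
    (hfin₂ : MemLp (fun x => ψ x - φ (x + γt x)) (ENNReal.ofReal p) volume) :
    eLpNorm (fun x => ψ (x - γ x) - φ x) (ENNReal.ofReal p) volume
      ≤ ENNReal.ofReal ((1 - c) ^ (-(1 / p))) *
          eLpNorm (fun x => ψ x - φ (x + γt x)) (ENNReal.ofReal p) volume := by
  have hp0 : 0 < p := lt_of_lt_of_le one_pos hp
  have hc0 : 0 ≤ c := le_trans (abs_nonneg _) (hder 0)
  have h1c : 0 < 1 - c := by linarith
  set g : ℝ → ℝ := fun x => x - γ x with hg
  set F : ℝ → ℝ := fun x => ψ x - φ (x + γt x) with hF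
  have hγdiff : Differentiable ℝ γ := hγ.differentiable one_ne_zero
  have hginj : Function.Injective g := by
    intro a b hab
    have := hinv₁ a
    have := hinv₁ b
    simp only [hg] at hab
    nlinarith [hinv₁ a, hinv₁ b, congrArg γt hab]
  have hg' : ∀ x ∈ Set.univ, HasFDerivWithinAt g
      ((1 : ℝ →L[ℝ] ℝ).smulRight (1 - deriv γ x)) Set.univ x := by
    intro x _
    exact (((hasDerivAt_id x).sub (hγdiff x).hasDerivAt).hasFDerivAt).hasFDerivWithinAt
  have hgsurj : Function.Surjective g := fun y => ⟨y + γt y, hinv₂ y⟩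
  have himg : g '' Set.univ = Set.univ := by
    rw [Set.image_univ]; exact hgsurj.range_eq
  -- change of variables
  have key : ∀ (G : ℝ → ENNReal),
      ∫⁻ x, G x = ∫⁻ x, ENNReal.ofReal |1 - deriv γ x| * G (g x) := by
    intro G
    have := lintegral_image_eq_lintegral_abs_det_fderiv_mul volume MeasurableSet.univ
      hg' (hginj.injOn) G
    simpa [himg, ContinuousLinearMap.det_toSpanSingleton] using this
  have hFg : ∀ x, F (g x) = ψ (x - γ x) - φ x := by
    intro x
    simp only [hF, hg, hinv₁ x]
  set q : ENNReal := ENNReal.ofReal p with hq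
  have hq0 : q ≠ 0 := by
    simp [hq, ENNReal.ofReal_eq_zero]; linarith
  have hqtop : q ≠ ⊤ := ENNReal.ofReal_ne_top
  have hqto : q.toReal = p := ENNReal.toReal_ofReal hp0.le
  -- main lintegral inequality
  have hbound : ∫⁻ x, ‖ψ (x - γ x) - φ x‖₊ ^ p ≤
      ENNReal.ofReal (1 - c)⁻¹ * ∫⁻ x, ‖F x‖₊ ^ p := by
    have hkey := key (fun x => ‖F x‖₊ ^ p)
    have hlow : ENNReal.ofReal (1 - c) * ∫⁻ x, ‖ψ (x - γ x) - φ x‖₊ ^ p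
        ≤ ∫⁻ x, ‖F x‖₊ ^ p := by
      rw [hkey, ← MeasureTheory.lintegral_const_mul' _ _ ENNReal.ofReal_ne_top]
      refine lintegral_mono fun x => ?_
      rw [hFg x]
      refine mul_le_mul_left (ENNReal.ofReal_le_ofReal ?_) _
      have hdx := hder x
      rw [abs_le] at hdx
      rw [abs_of_pos (by linarith : (0:ℝ) < 1 - deriv γ x)]
      linarith
    calc ∫⁻ x, ‖ψ (x - γ x) - φ x‖₊ ^ p
        = ENNReal.ofReal (1 - c)⁻¹ * (ENNReal.ofReal (1 - c) *
            ∫⁻ x, ‖ψ (x - γ x) - φ x‖₊ ^ p) := by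
          rw [← mul_assoc, ← ENNReal.ofReal_mul (by positivity), inv_mul_cancel₀ h1c.ne',
            ENNReal.ofReal_one, one_mul]
      _ ≤ ENNReal.ofReal (1 - c)⁻¹ * ∫⁻ x, ‖F x‖₊ ^ p := by gcongr
  -- convert to eLpNorm
  rw [eLpNorm_eq_lintegral_rpow_enorm_toReal hq0 hqtop, eLpNorm_eq_lintegral_rpow_enorm_toReal hq0 hqtop,
    hqto]
  calc (∫⁻ x, (‖ψ (x - γ x) - φ x‖₊ : ENNReal) ^ p) ^ (1 / p)
      ≤ (ENNReal.ofReal (1 - c)⁻¹ * ∫⁻ x, (‖F x‖₊ : ENNReal) ^ p) ^ (1 / p) := by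
        exact ENNReal.rpow_le_rpow hbound (by positivity)
    _ = (ENNReal.ofReal (1 - c)⁻¹) ^ (1 / p) *
          (∫⁻ x, (‖F x‖₊ : ENNReal) ^ p) ^ (1 / p) := by
        rw [ENNReal.mul_rpow_of_nonneg _ _ (by positivity)]
    _ = ENNReal.ofReal ((1 - c) ^ (-(1 / p))) *
          (∫⁻ x, (‖F x‖₊ : ENNReal) ^ p) ^ (1 / p) := by
        congr 1
        rw [ENNReal.ofReal_rpow_of_pos (by positivity), Real.inv_rpow h1c.le,
          ← Real.rpow_neg h1c.le]
end
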